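/- For probability measures μ and ν on ℝ with finite first moments, the 1-Wasserstein distance equals the L¹ distance between their cumulative distribution functions: W₁(μ, ν) = ∫_ℝ |F_μ(t) − F_ν(t)| dt. -/

import Mathlib

open MeasureTheory ProbabilityTheory

/-- 1-Wasserstein distance on ℝ, defined via couplings. -/
noncomputable def W1 (μ ν : MeasureTheory.Measure ℝ) : ℝ :=
  sInf { r : ℝ | ∃ π : MeasureTheory.Measure (ℝ × ℝ),
    π.map Prod.fst = μ ∧ π.map Prod.snd = ν ∧ r = ∫ p, |p.1 - p.2| ∂π }

/-!
Since `|x - y|` is the Lebesgue measure of `{t | x ≤ t} ∆ {t | y ≤ t}`, Tonelli turns the cost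
of a coupling `π` into `∫ π ({p | p.1 ≤ t} ∆ {p | p.2 ≤ t}) dt`, and each integrand is at least
`|F_μ t - F_ν t|`. For the quantile coupling `u ↦ (F_μ⁻¹ u, F_ν⁻¹ u)` of the uniform law on
`(0, 1)` the two events are nested, so the bound is attained.
-/

open Set
open scoped symmDiff

namespace Set

variable {α : Type*} [LinearOrder α]

theorem Ici_symmDiff_Ici (a b : α) : Ici a ∆ Ici b = Ico (min a b) (max a b) := by
  ext x
  simp only [mem_symmDiff, mem_Ici, mem_Ico, min_le_iff, lt_max_iff]
  grind

theorem Iic_symmDiff_Iic (a b : α) : Iic a ∆ Iic b = Ioc (min a b) (max a b) := by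
  ext x
  simp only [mem_symmDiff, mem_Iic, mem_Ioc, min_lt_iff, le_max_iff]
  grind

end Set

theorem Real.volume_Ici_symmDiff_Ici (x y : ℝ) :
    volume (Ici x ∆ Ici y) = ENNReal.ofReal |x - y| := by
  rw [Ici_symmDiff_Ici, Real.volume_Ico, max_sub_min_eq_abs']

theorem volume_restrict_Ioo_Iic {c : ℝ} (hc : c ≤ 1) :
    volume.restrict (Ioo 0 1) (Iic c) = ENNReal.ofReal c := by
  rw [Measure.restrict_congr_set Ioo_ae_eq_Ioc, Measure.restrict_apply measurableSet_Iic,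
    Iic_inter_Ioc_of_le hc, Real.volume_Ioc, sub_zero]

theorem volume_restrict_Ioo_Iic_symmDiff_Iic {a b : ℝ} (ha : a ∈ Icc 0 1) (hb : b ∈ Icc 0 1) :
    volume.restrict (Ioo 0 1) (Iic a ∆ Iic b) = ENNReal.ofReal |a - b| := by
  rw [Measure.restrict_congr_set Ioo_ae_eq_Ioc, Iic_symmDiff_Iic,
    Measure.restrict_eq_self _ (Ioc_subset_Ioc (le_min ha.1 hb.1) (max_le ha.2 hb.2)),
    Real.volume_Ioc, max_sub_min_eq_abs']

theorem lintegral_abs_sub_eq_lintegral_measure_symmDiff (π : Measure (ℝ × ℝ)) [SFinite π] :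
    ∫⁻ p, ENNReal.ofReal |p.1 - p.2| ∂π = ∫⁻ t, π ({p | p.1 ≤ t} ∆ {p | p.2 ≤ t}) := by
  let S : Set ((ℝ × ℝ) × ℝ) := {q | q.1.1 ≤ q.2} ∆ {q | q.1.2 ≤ q.2}
  have hS : MeasurableSet S :=
    (measurableSet_le (by fun_prop) (by fun_prop)).symmDiff
      (measurableSet_le (by fun_prop) (by fun_prop))
  calc ∫⁻ p, ENNReal.ofReal |p.1 - p.2| ∂π = ∫⁻ p, volume (Prod.mk p ⁻¹' S) ∂π :=
        lintegral_congr fun p => (Real.volume_Ici_symmDiff_Ici p.1 p.2).symm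
    _ = π.prod volume S := (Measure.prod_apply hS).symm
    _ = ∫⁻ t, π ({p | p.1 ≤ t} ∆ {p | p.2 ≤ t}) := Measure.prod_apply_symm hS

theorem integral_abs_cdf_sub_eq_toReal_lintegral (μ ν : Measure ℝ) :
    ∫ t, |cdf μ t - cdf ν t| = (∫⁻ t, ENNReal.ofReal |cdf μ t - cdf ν t|).toReal := by
  have hF : Measurable fun t => |cdf μ t - cdf ν t| :=
    ((monotone_cdf μ).measurable.sub (monotone_cdf ν).measurable).abs
  exact integral_eq_lintegral_of_nonneg_ae (ae_of_all _ fun _ => abs_nonneg _)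
    hF.aestronglyMeasurable

/-- Outside `(0, 1)` the value is a junk value of `sInf`. -/
noncomputable def quantile (μ : Measure ℝ) (u : ℝ) : ℝ :=
  sInf {x | u ≤ cdf μ x}

section Quantile

variable (μ : Measure ℝ) {u : ℝ}

theorem bddBelow_setOf_le_cdf (hu : 0 < u) : BddBelow {x | u ≤ cdf μ x} := by
  obtain ⟨c, hc⟩ := ((tendsto_cdf_atBot μ).eventually_lt_const hu).exists
  exact ⟨c, fun x hx => ((monotone_cdf μ).reflect_lt (hc.trans_le hx)).le⟩

theorem nonempty_setOf_le_cdf (hu : u < 1) : {x | u ≤ cdf μ x}.Nonempty :=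
  ((tendsto_cdf_atTop μ).eventually_const_lt hu).exists.imp fun _ => le_of_lt

theorem quantile_le_iff (hu : u ∈ Ioo 0 1) {t : ℝ} : quantile μ u ≤ t ↔ u ≤ cdf μ t := by
  refine ⟨fun h => ?_, fun h => csInf_le (bddBelow_setOf_le_cdf μ hu.1) h⟩
  by_contra! ht
  obtain ⟨y, hy, hty⟩ : ∃ y, cdf μ y < u ∧ t < y :=
    ((((cdf μ).right_continuous t).eventually (gt_mem_nhds ht)).filter_mono
      (nhdsWithin_mono _ Ioi_subset_Ici_self) |>.and self_mem_nhdsWithin).exists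
  have : y ≤ quantile μ u := le_csInf (nonempty_setOf_le_cdf μ hu.2) fun x hx =>
    ((monotone_cdf μ).reflect_lt (hy.trans_le hx)).le
  linarith

theorem monotoneOn_quantile : MonotoneOn (quantile μ) (Ioo 0 1) := fun _ hu _ hv huv =>
  (quantile_le_iff μ hu).2 (huv.trans ((quantile_le_iff μ hv).1 le_rfl))

theorem aemeasurable_quantile : AEMeasurable (quantile μ) (volume.restrict (Ioo 0 1)) :=
  aemeasurable_restrict_of_monotoneOn measurableSet_Ioo (monotoneOn_quantile μ)

theorem preimage_quantile_Iic_ae_eq (t : ℝ) :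
    quantile μ ⁻¹' Iic t =ᵐ[volume.restrict (Ioo 0 1)] Iic (cdf μ t) :=
  (ae_restrict_mem measurableSet_Ioo).mono fun _ hu => propext (quantile_le_iff μ hu)

theorem map_quantile [IsProbabilityMeasure μ] :
    (volume.restrict (Ioo 0 1)).map (quantile μ) = μ := by
  refine Measure.ext_of_Iic _ _ fun t => ?_
  rw [Measure.map_apply_of_aemeasurable (aemeasurable_quantile μ) measurableSet_Iic,
    measure_congr (preimage_quantile_Iic_ae_eq μ t),
    volume_restrict_Ioo_Iic (cdf_le_one μ t), ofReal_cdf]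

end Quantile

noncomputable def quantileCoupling (μ ν : Measure ℝ) : Measure (ℝ × ℝ) :=
  (volume.restrict (Ioo 0 1)).map fun u => (quantile μ u, quantile ν u)

instance (μ ν : Measure ℝ) : IsFiniteMeasure (quantileCoupling μ ν) := by
  unfold quantileCoupling
  infer_instance

section QuantileCoupling

variable (μ ν : Measure ℝ)

theorem aemeasurable_quantile_prod :
    AEMeasurable (fun u => (quantile μ u, quantile ν u)) (volume.restrict (Ioo 0 1)) :=
  (aemeasurable_quantile μ).prodMk (aemeasurable_quantile ν)

theorem quantileCoupling_map_fst [IsProbabilityMeasure μ] :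
    (quantileCoupling μ ν).map Prod.fst = μ := by
  rw [quantileCoupling, AEMeasurable.map_map_of_aemeasurable measurable_fst.aemeasurable
    (aemeasurable_quantile_prod μ ν)]
  exact map_quantile μ

theorem quantileCoupling_map_snd [IsProbabilityMeasure ν] :
    (quantileCoupling μ ν).map Prod.snd = ν := by
  rw [quantileCoupling, AEMeasurable.map_map_of_aemeasurable measurable_snd.aemeasurable
    (aemeasurable_quantile_prod μ ν)]
  exact map_quantile ν

/-- Comonotonicity: up to null sets the two events are `{u ≤ F_μ t}` and `{u ≤ F_ν t}`. -/
theorem quantileCoupling_symmDiff (t : ℝ) :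
    quantileCoupling μ ν ({p | p.1 ≤ t} ∆ {p | p.2 ≤ t}) =
      ENNReal.ofReal |cdf μ t - cdf ν t| := by
  rw [quantileCoupling, Measure.map_apply_of_aemeasurable (aemeasurable_quantile_prod μ ν)
    ((measurableSet_le measurable_fst measurable_const).symmDiff
      (measurableSet_le measurable_snd measurable_const)), preimage_symmDiff]
  exact (measure_congr ((preimage_quantile_Iic_ae_eq μ t).symmDiff
    (preimage_quantile_Iic_ae_eq ν t))).trans (volume_restrict_Ioo_Iic_symmDiff_Iic
      ⟨cdf_nonneg μ t, cdf_le_one μ t⟩ ⟨cdf_nonneg ν t, cdf_le_one ν t⟩)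

theorem integral_abs_sub_quantileCoupling :
    ∫ p, |p.1 - p.2| ∂quantileCoupling μ ν = ∫ t, |cdf μ t - cdf ν t| := by
  rw [integral_eq_lintegral_of_nonneg_ae (ae_of_all _ fun _ => abs_nonneg _) (by fun_prop),
    integral_abs_cdf_sub_eq_toReal_lintegral, lintegral_abs_sub_eq_lintegral_measure_symmDiff]
  simp_rw [quantileCoupling_symmDiff]

end QuantileCoupling

section Coupling

variable {μ ν : Measure ℝ} [IsProbabilityMeasure μ] [IsProbabilityMeasure ν]
  {π : Measure (ℝ × ℝ)}

theorem isProbabilityMeasure_of_map_fst (h : π.map Prod.fst = μ) : IsProbabilityMeasure π :=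
  have : IsProbabilityMeasure (π.map Prod.fst) := h ▸ ‹_›
  Measure.isProbabilityMeasure_of_map Prod.fst

theorem cdf_eq_measureReal_fst (h : π.map Prod.fst = μ) (t : ℝ) :
    cdf μ t = π.real {p | p.1 ≤ t} := by
  rw [cdf_eq_real, ← h, map_measureReal_apply measurable_fst measurableSet_Iic]
  rfl

theorem cdf_eq_measureReal_snd (h : π.map Prod.snd = ν) (t : ℝ) :
    cdf ν t = π.real {p | p.2 ≤ t} := by
  rw [cdf_eq_real, ← h, map_measureReal_apply measurable_snd measurableSet_Iic]
  rfl

theorem ofReal_abs_cdf_sub_le_measure_symmDiff (h₁ : π.map Prod.fst = μ)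
    (h₂ : π.map Prod.snd = ν) (t : ℝ) :
    ENNReal.ofReal |cdf μ t - cdf ν t| ≤ π ({p | p.1 ≤ t} ∆ {p | p.2 ≤ t}) := by
  have := isProbabilityMeasure_of_map_fst h₁
  rw [cdf_eq_measureReal_fst h₁, cdf_eq_measureReal_snd h₂, ← ofReal_measureReal]
  exact ENNReal.ofReal_le_ofReal <| abs_measureReal_sub_le_measureReal_symmDiff
    (measurableSet_le measurable_fst measurable_const).nullMeasurableSet
    (measurableSet_le measurable_snd measurable_const).nullMeasurableSet

theorem lintegral_abs_cdf_sub_le (h₁ : π.map Prod.fst = μ) (h₂ : π.map Prod.snd = ν) :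
    ∫⁻ t, ENNReal.ofReal |cdf μ t - cdf ν t| ≤ ∫⁻ p, ENNReal.ofReal |p.1 - p.2| ∂π := by
  have := isProbabilityMeasure_of_map_fst h₁
  rw [lintegral_abs_sub_eq_lintegral_measure_symmDiff]
  exact lintegral_mono (ofReal_abs_cdf_sub_le_measure_symmDiff h₁ h₂)

theorem integral_abs_cdf_sub_le (h₁ : π.map Prod.fst = μ) (h₂ : π.map Prod.snd = ν)
    (hπ : Integrable (fun p : ℝ × ℝ => |p.1 - p.2|) π) :
    ∫ t, |cdf μ t - cdf ν t| ≤ ∫ p, |p.1 - p.2| ∂π := by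
  rw [integral_abs_cdf_sub_eq_toReal_lintegral,
    integral_eq_lintegral_of_nonneg_ae (ae_of_all _ fun _ => abs_nonneg _) hπ.1]
  exact ENNReal.toReal_mono hπ.lintegral_lt_top.ne (lintegral_abs_cdf_sub_le h₁ h₂)

end Coupling

theorem integrable_abs_sub_of_map {μ ν : Measure ℝ} {π : Measure (ℝ × ℝ)}
    (h₁ : π.map Prod.fst = μ) (h₂ : π.map Prod.snd = ν)
    (hμ : Integrable (fun x => |x|) μ) (hν : Integrable (fun x => |x|) ν) :
    Integrable (fun p : ℝ × ℝ => |p.1 - p.2|) π := by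
  have hid : ∀ {m : Measure ℝ}, Integrable (fun x => |x|) m → Integrable id m :=
    (integrable_norm_iff aestronglyMeasurable_id).1
  exact (((hid (h₁ ▸ hμ)).comp_measurable measurable_fst).sub
    ((hid (h₂ ▸ hν)).comp_measurable measurable_snd)).abs

/-- W₁ equals the L¹ distance between CDFs. -/
theorem w1_eq_integral_abs_cdf_sub (μ ν : MeasureTheory.Measure ℝ)
    [IsProbabilityMeasure μ] [IsProbabilityMeasure ν]
    (hμ : Integrable (fun x => |x|) μ)
    (hν : Integrable (fun x => |x|) ν) :
    W1 μ ν = ∫ t, |cdf μ t - cdf ν t| := by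
  refine IsLeast.csInf_eq ⟨⟨quantileCoupling μ ν, quantileCoupling_map_fst μ ν,
    quantileCoupling_map_snd μ ν, (integral_abs_sub_quantileCoupling μ ν).symm⟩, ?_⟩
  rintro _ ⟨π, h₁, h₂, rfl⟩
  exact integral_abs_cdf_sub_le h₁ h₂ (integrable_abs_sub_of_map h₁ h₂ hμ hν)
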